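/- Let $r_1,\dots,r_m$ be positive integers with $\sum r_i = r$ and let $\mu_1 > \mu_2 > \dots > \mu_m$ be rational numbers. Set $D = \sum_{i<j} r_i r_j(\mu_i - \mu_j)$, $\mu_{\max} = \mu_1$, $\mu_{\min} = \mu_m$. Then $(r-1)(\mu_{\max} - \mu_{\min}) \le D \le \frac{r^2}{4}(\mu_{\max} - \mu_{\min})$. -/
import Mathlib

open Finset

private lemma teleIco (M : ℕ → ℚ) (a : ℕ) : ∀ b, a ≤ b →
    ∑ k ∈ Finset.Ico a b, (M k - M (k + 1)) = M a - M b := by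
  intro b hb
  induction b, hb using Nat.le_induction with
  | base => simp
  | succ b hb ih => rw [Finset.sum_Ico_succ_top hb, ih]; ring

private lemma ident (m : ℕ) (R M : ℕ → ℚ) :
    (∑ i ∈ range m, ∑ j ∈ range m, if i < j then R i * R j * (M i - M j) else 0)
      = ∑ k ∈ range (m - 1), (M k - M (k + 1)) *
          ((∑ i ∈ range (k + 1), R i) * (∑ j ∈ Finset.Ico (k + 1) m, R j)) := by
  have step1 : (∑ i ∈ range m, ∑ j ∈ range m,
      if i < j then R i * R j * (M i - M j) else 0)
      = ∑ i ∈ range m, ∑ j ∈ range m, ∑ k ∈ range (m - 1),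
          (if i ≤ k ∧ k < j then R i * R j * (M k - M (k + 1)) else 0) := by
    refine Finset.sum_congr rfl fun i hi => Finset.sum_congr rfl fun j hj => ?_
    simp only [Finset.mem_range] at hi hj
    by_cases h : i < j
    · rw [if_pos h]
      have hfil : (range (m - 1)).filter (fun k => i ≤ k ∧ k < j) = Finset.Ico i j := by
        ext k; simp only [Finset.mem_filter, Finset.mem_range, Finset.mem_Ico]; omega
      rw [← Finset.sum_filter, hfil, ← Finset.mul_sum, teleIco M i j h.le]
    · rw [if_neg h]
      refine (Finset.sum_eq_zero fun k hk => ?_).symm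
      rw [if_neg]; omega
  rw [step1]
  have swap : (∑ i ∈ range m, ∑ j ∈ range m, ∑ k ∈ range (m - 1),
      (if i ≤ k ∧ k < j then R i * R j * (M k - M (k + 1)) else 0))
      = ∑ k ∈ range (m - 1), ∑ i ∈ range m, ∑ j ∈ range m,
          (if i ≤ k ∧ k < j then R i * R j * (M k - M (k + 1)) else 0) := by
    rw [Finset.sum_congr rfl fun i (_ : i ∈ range m) => (Finset.sum_comm :
      (∑ j ∈ range m, ∑ k ∈ range (m - 1),
        (if i ≤ k ∧ k < j then R i * R j * (M k - M (k + 1)) else 0))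
      = ∑ k ∈ range (m - 1), ∑ j ∈ range m,
          (if i ≤ k ∧ k < j then R i * R j * (M k - M (k + 1)) else 0))]
    exact Finset.sum_comm
  rw [swap]
  refine Finset.sum_congr rfl fun k hk => ?_
  simp only [Finset.mem_range] at hk
  have hk1 : k + 1 < m := by omega
  have split : ∀ i j : ℕ, (if i ≤ k ∧ k < j then R i * R j * (M k - M (k + 1)) else 0)
      = (if i ≤ k then R i else 0) * ((if k < j then R j else 0) * (M k - M (k + 1))) := by
    intro i j
    by_cases h1 : i ≤ k <;> by_cases h2 : k < j <;> simp [h1, h2] <;> try ring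
  calc ∑ i ∈ range m, ∑ j ∈ range m,
        (if i ≤ k ∧ k < j then R i * R j * (M k - M (k + 1)) else 0)
      = ∑ i ∈ range m, ∑ j ∈ range m,
        (if i ≤ k then R i else 0) * ((if k < j then R j else 0) * (M k - M (k + 1))) := by
        refine Finset.sum_congr rfl fun i _ => Finset.sum_congr rfl fun j _ => split i j
    _ = (∑ i ∈ range m, if i ≤ k then R i else 0) *
        ((∑ j ∈ range m, if k < j then R j else 0) * (M k - M (k + 1))) := by
        conv_rhs => rw [Finset.sum_mul]
        refine Finset.sum_congr rfl fun i _ => ?_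
        rw [← Finset.mul_sum, ← Finset.sum_mul]
    _ = (M k - M (k + 1)) *
        ((∑ i ∈ range (k + 1), R i) * (∑ j ∈ Finset.Ico (k + 1) m, R j)) := by
        have h1 : (∑ i ∈ range m, if i ≤ k then R i else 0)
            = ∑ i ∈ range (k + 1), R i := by
          rw [← Finset.sum_filter]
          congr 1
          ext i; simp only [Finset.mem_filter, Finset.mem_range]; omega
        have h2 : (∑ j ∈ range m, if k < j then R j else 0)
            = ∑ j ∈ Finset.Ico (k + 1) m, R j := by
          rw [← Finset.sum_filter]
          congr 1
          ext j; simp only [Finset.mem_filter, Finset.mem_range, Finset.mem_Ico]; omega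
        rw [h1, h2]; ring

private lemma core (m : ℕ) (R M : ℕ → ℚ) (hR : ∀ i, i < m → 1 ≤ R i)
    (hM : ∀ k, k + 1 < m → M (k + 1) < M k) :
    ((∑ i ∈ range m, R i) - 1) * (M 0 - M (m - 1)) ≤
        (∑ i ∈ range m, ∑ j ∈ range m, if i < j then R i * R j * (M i - M j) else 0) ∧
    (∑ i ∈ range m, ∑ j ∈ range m, if i < j then R i * R j * (M i - M j) else 0) ≤
        (∑ i ∈ range m, R i) ^ 2 / 4 * (M 0 - M (m - 1)) := by
  rw [ident]
  have tele0 : ∑ k ∈ range (m - 1), (M k - M (k + 1)) = M 0 - M (m - 1) :=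
    Finset.sum_range_sub' M (m - 1)
  set tot : ℚ := ∑ i ∈ range m, R i with htot
  have key : ∀ k ∈ range (m - 1),
      ((tot - 1) * (M k - M (k + 1)) ≤
        (M k - M (k + 1)) * ((∑ i ∈ range (k + 1), R i) * (∑ j ∈ Finset.Ico (k + 1) m, R j))) ∧
      ((M k - M (k + 1)) * ((∑ i ∈ range (k + 1), R i) * (∑ j ∈ Finset.Ico (k + 1) m, R j)) ≤
        tot ^ 2 / 4 * (M k - M (k + 1))) := by
    intro k hk
    simp only [Finset.mem_range] at hk
    have hk1 : k + 1 < m := by omega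
    set S : ℚ := ∑ i ∈ range (k + 1), R i with hS
    set T : ℚ := ∑ j ∈ Finset.Ico (k + 1) m, R j with hT
    have hd : 0 ≤ M k - M (k + 1) := by
      have := hM k hk1; linarith
    have hS1 : 1 ≤ S := by
      refine le_trans (hR 0 (by omega)) ?_
      refine Finset.single_le_sum (fun i hi => ?_) (by simp)
      simp only [Finset.mem_range] at hi
      exact le_trans zero_le_one (hR i (by omega))
    have hT1 : 1 ≤ T := by
      refine le_trans (hR (k + 1) hk1) ?_
      refine Finset.single_le_sum (fun j hj => ?_) (by simp [Finset.mem_Ico]; omega)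
      simp only [Finset.mem_Ico] at hj
      exact le_trans zero_le_one (hR j (by omega))
    have hST : S + T = tot := by
      rw [hS, hT, htot]
      exact Finset.sum_range_add_sum_Ico R (by omega)
    constructor
    · nlinarith [mul_nonneg (mul_nonneg hd (by linarith : (0:ℚ) ≤ S - 1)) (by linarith : (0:ℚ) ≤ T - 1)]
    · have htot2 : tot ^ 2 = (S + T) ^ 2 := by rw [hST]
      nlinarith [mul_nonneg hd (sq_nonneg (S - T)), htot2]
  constructor
  · calc (tot - 1) * (M 0 - M (m - 1))
        = ∑ k ∈ range (m - 1), (tot - 1) * (M k - M (k + 1)) := by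
          rw [← Finset.mul_sum, tele0]
      _ ≤ _ := Finset.sum_le_sum fun k hk => (key k hk).1
  · calc _ ≤ ∑ k ∈ range (m - 1), tot ^ 2 / 4 * (M k - M (k + 1)) :=
          Finset.sum_le_sum fun k hk => (key k hk).2
      _ = tot ^ 2 / 4 * (M 0 - M (m - 1)) := by rw [← Finset.mul_sum, tele0]

/-- Proposition 2.4 (combinatorial content): bounds for twice the area of the
Harder–Narasimhan polygon in terms of the total rank and extreme slopes. -/
theorem stmt_0 (m : ℕ) (hm : 0 < m) (r : Fin m → ℕ) (hr : ∀ i, 0 < r i)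
    (μ : Fin m → ℚ) (hμ : StrictAnti μ) :
    ((∑ i, (r i : ℚ)) - 1) * (μ ⟨0, hm⟩ - μ ⟨m - 1, Nat.sub_lt hm one_pos⟩) ≤
        (∑ i, ∑ j, if i < j then (r i : ℚ) * (r j : ℚ) * (μ i - μ j) else 0) ∧
    (∑ i, ∑ j, if i < j then (r i : ℚ) * (r j : ℚ) * (μ i - μ j) else 0) ≤
        (∑ i, (r i : ℚ))^2 / 4 * (μ ⟨0, hm⟩ - μ ⟨m - 1, Nat.sub_lt hm one_pos⟩) := by
  set R : ℕ → ℚ := fun n => if h : n < m then (r ⟨n, h⟩ : ℚ) else 1 with hRdef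
  set M : ℕ → ℚ := fun n => if h : n < m then μ ⟨n, h⟩ else 0 with hMdef
  have hRval : ∀ i : Fin m, (r i : ℚ) = R i.val := by
    intro i; simp [hRdef, i.isLt]
  have hMval : ∀ i : Fin m, μ i = M i.val := by
    intro i; simp [hMdef, i.isLt]
  have hsum : (∑ i, (r i : ℚ)) = ∑ i ∈ range m, R i := by
    rw [← Fin.sum_univ_eq_sum_range R m]
    exact Finset.sum_congr rfl fun i _ => hRval i
  have hD : (∑ i, ∑ j, if i < j then (r i : ℚ) * (r j : ℚ) * (μ i - μ j) else 0)
      = ∑ i ∈ range m, ∑ j ∈ range m, if i < j then R i * R j * (M i - M j) else 0 := by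
    rw [← Fin.sum_univ_eq_sum_range (fun i => ∑ j ∈ range m,
        if i < j then R i * R j * (M i - M j) else 0) m]
    refine Finset.sum_congr rfl fun i _ => ?_
    rw [← Fin.sum_univ_eq_sum_range (fun j => if i.val < j then R i.val * R j * (M i.val - M j) else 0) m]
    refine Finset.sum_congr rfl fun j _ => ?_
    rw [hRval i, hRval j, hMval i, hMval j]
    simp only [Fin.lt_def]
  have hM0 : μ ⟨0, hm⟩ = M 0 := by simp [hMdef, hm]
  have hMm : μ ⟨m - 1, Nat.sub_lt hm one_pos⟩ = M (m - 1) := by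
    simp [hMdef, Nat.sub_lt hm one_pos]
  rw [hsum, hD, hM0, hMm]
  refine core m R M (fun i hi => ?_) (fun k hk => ?_)
  · simp only [hRdef, dif_pos hi]
    exact_mod_cast hr ⟨i, hi⟩
  · simp only [hMdef, dif_pos hk, dif_pos (by omega : k < m)]
    exact hμ (by simp [Fin.lt_def])
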